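/- Lemma (hl2): in the state-label sequence (Δ_i)_{i≥0} extracted from a ticked branch b of a tableau for φ, for every formula α and every i ≥ 0: if Xα ∈ Δ_i then α ∈ Δ_{i+1}, and if ¬Xα ∈ Δ_i then ¬α ∈ Δ_{i+1}. -/
import Mathlib


/-- LTL formulas over atomic propositions `AP`, built from atoms using
negation, conjunction, next (X) and until (U). -/
inductive LTL (AP : Type) : Type
  | atom : AP → LTL AP
  | neg : LTL AP → LTL AP
  | and : LTL AP → LTL AP → LTL AP
  | next : LTL AP → LTL AP
  | until_ : LTL AP → LTL AP → LTL AP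
  deriving DecidableEq

namespace LTL

variable {AP : Type}

/-- The shifted ω-word `σ_{≥i}`. -/
def shift (σ : ℕ → Set AP) (i : ℕ) : ℕ → Set AP := fun j => σ (i + j)

/-- Satisfaction of an LTL formula on an ω-word. -/
def Sat : (ℕ → Set AP) → LTL AP → Prop
  | σ, atom p => p ∈ σ 0
  | σ, neg α => ¬ Sat σ α
  | σ, and α β => Sat σ α ∧ Sat σ β
  | σ, next α => Sat (shift σ 1) α
  | σ, until_ α β => ∃ i, Sat (shift σ i) β ∧ ∀ j < i, Sat (shift σ j) α

/-- A formula is satisfiable iff some ω-word satisfies it. -/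
def Satisfiable (φ : LTL AP) : Prop := ∃ σ : ℕ → Set AP, Sat σ φ

/-- Standard abbreviations. -/
def or' (α β : LTL AP) : LTL AP := neg ((neg α).and (neg β))
def imp (α β : LTL AP) : LTL AP := or' (neg α) β
def iff' (α β : LTL AP) : LTL AP := (imp α β).and (imp β α)
/-- `⊤ ≡ p ∨ ¬p`. -/
def top (p : AP) : LTL AP := or' (atom p) (neg (atom p))
/-- `⊥ ≡ ¬⊤`. -/
def bot (p : AP) : LTL AP := neg (top p)
/-- `F α ≡ ⊤ U α`. -/
def F (p : AP) (α : LTL AP) : LTL AP := (top p).until_ α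
/-- `G α ≡ ¬F¬α`. -/
def G (p : AP) (α : LTL AP) : LTL AP := neg (F p (neg α))

/-- Elementary formulas: atoms, negated atoms, `Xα` and `¬Xα`. -/
def Elementary : LTL AP → Prop
  | atom _ => True
  | neg (atom _) => True
  | next _ => True
  | neg (next _) => True
  | _ => False

/-- A finite set of formulas is poised when it is nonempty, contains no direct
contradiction, and all of its members are elementary. -/
def Poised (Γ : Finset (LTL AP)) : Prop :=
  Γ.Nonempty ∧ (∀ α : LTL AP, ¬(α ∈ Γ ∧ neg α ∈ Γ)) ∧ ∀ ψ ∈ Γ, Elementary ψ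

/-- The label of the TRANSITION child: `{α : Xα ∈ Γ} ∪ {¬α : ¬Xα ∈ Γ}`. -/
def nextLabel [DecidableEq AP] (Γ : Finset (LTL AP)) : Finset (LTL AP) :=
  Γ.biUnion fun ψ =>
    match ψ with
    | next α => {α}
    | neg (next α) => {neg α}
    | _ => (∅ : Finset (LTL AP))

/-- Static rules with one child (consuming the decomposed formula). -/
inductive Static1 [DecidableEq AP] : Finset (LTL AP) → Finset (LTL AP) → Prop
  | conj (α β : LTL AP) (Δ : Finset (LTL AP)) (h : α.and β ∉ Δ) :
      Static1 (insert (α.and β) Δ) (insert α (insert β Δ))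
  | negneg (α : LTL AP) (Δ : Finset (LTL AP)) (h : neg (neg α) ∉ Δ) :
      Static1 (insert (neg (neg α)) Δ) (insert α Δ)

/-- Static rules with two children (consuming the decomposed formula). -/
inductive Static2 [DecidableEq AP] :
    Finset (LTL AP) → Finset (LTL AP) → Finset (LTL AP) → Prop
  | negconj (α β : LTL AP) (Δ : Finset (LTL AP)) (h : neg (α.and β) ∉ Δ) :
      Static2 (insert (neg (α.and β)) Δ) (insert (neg α) Δ) (insert (neg β) Δ)
  | untl (α β : LTL AP) (Δ : Finset (LTL AP)) (h : α.until_ β ∉ Δ) :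
      Static2 (insert (α.until_ β) Δ) (insert β Δ)
        (insert α (insert (next (α.until_ β)) Δ))
  | neguntl (α β : LTL AP) (Δ : Finset (LTL AP)) (h : neg (α.until_ β) ∉ Δ) :
      Static2 (insert (neg (α.until_ β)) Δ)
        (insert (neg α) (insert (neg β) Δ))
        (insert (neg β) (insert (next (neg (α.until_ β))) Δ))

/-- Label at position `i` of a list of labels (default `∅`). -/
def labelAt (L : List (Finset (LTL AP))) (i : ℕ) : Finset (LTL AP) := L.getD i ∅

/-- LOOP rule condition for a node labelled `Γ` whose list of proper-ancestor
labels (root first) is `anc`: some poised proper ancestor `u` has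
`Γ_u ⊇ Γ`, and every X-eventuality `X(αUβ)` of `Γ_u` is fulfilled by some node
`w` with `u < w ≤ v` (`v` being the current node, of index `anc.length`). -/
def LoopCond (anc : List (Finset (LTL AP))) (Γ : Finset (LTL AP)) : Prop :=
  ∃ u < anc.length, Poised (labelAt anc u) ∧ Γ ⊆ labelAt anc u ∧
    ∀ α β : LTL AP, next (α.until_ β) ∈ labelAt anc u →
      ∃ w, u < w ∧ w ≤ anc.length ∧ β ∈ labelAt (anc ++ [Γ]) w

/-- PRUNE rule condition: `u < v < w` all bear the same poised label `Γ`
(`w` the current node) and every X-eventuality of `Γ` fulfilled in `(v,w]` is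
also fulfilled in `(u,v]`. -/
def PruneCond (anc : List (Finset (LTL AP))) (Γ : Finset (LTL AP)) : Prop :=
  ∃ u v, u < v ∧ v < anc.length ∧ labelAt anc u = Γ ∧ labelAt anc v = Γ ∧
    ∀ α β : LTL AP, next (α.until_ β) ∈ Γ →
      (∃ x, v < x ∧ x ≤ anc.length ∧ β ∈ labelAt (anc ++ [Γ]) x) →
      (∃ y, u < y ∧ y ≤ v ∧ β ∈ labelAt anc y)

/-- PRUNE₀ rule condition: some proper ancestor `u` has the same poised label
`Γ` as the current node `v`, `Γ` contains at least one X-eventuality and no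
X-eventuality of `Γ` is fulfilled in `(u,v]`. -/
def Prune0Cond (anc : List (Finset (LTL AP))) (Γ : Finset (LTL AP)) : Prop :=
  ∃ u < anc.length, labelAt anc u = Γ ∧
    (∃ α β : LTL AP, next (α.until_ β) ∈ Γ) ∧
    ∀ α β : LTL AP, next (α.until_ β) ∈ Γ →
      ¬ ∃ x, u < x ∧ x ≤ anc.length ∧ β ∈ labelAt (anc ++ [Γ]) x

end LTL

open LTL in
/-- Tableau trees: ticked leaves, crossed leaves, unfinished leaves and inner
nodes with one or two children; every node carries a finite set of formulas. -/
inductive Tab (AP : Type) : Type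
  | tick : Finset (LTL AP) → Tab AP
  | cross : Finset (LTL AP) → Tab AP
  | unfin : Finset (LTL AP) → Tab AP
  | node1 : Finset (LTL AP) → Tab AP → Tab AP
  | node2 : Finset (LTL AP) → Tab AP → Tab AP → Tab AP

namespace Tab

variable {AP : Type}

def label : Tab AP → Finset (LTL AP)
  | tick Γ => Γ
  | cross Γ => Γ
  | unfin Γ => Γ
  | node1 Γ _ => Γ
  | node2 Γ _ _ => Γ

/-- A tableau is finished when every leaf is ticked or crossed. -/
def Finished : Tab AP → Prop
  | tick _ => True
  | cross _ => True
  | unfin _ => False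
  | node1 _ t => t.Finished
  | node2 _ t₁ t₂ => t₁.Finished ∧ t₂.Finished

/-- A tableau is successful when it has at least one ticked leaf. -/
def Successful : Tab AP → Prop
  | tick _ => True
  | cross _ => False
  | unfin _ => False
  | node1 _ t => t.Successful
  | node2 _ t₁ t₂ => t₁.Successful ∨ t₂.Successful

end Tab

open LTL in
/-- `Valid anc t` : the tree `t` is built according to the tableau rules, where
`anc` is the list of labels of the proper ancestors of the root of `t`
(root of the whole tableau first). -/
inductive Valid {AP : Type} [DecidableEq AP] :
    List (Finset (LTL AP)) → Tab AP → Prop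
  | empty (anc) : Valid anc (Tab.tick (∅ : Finset (LTL AP)))
  | contra (anc) (Γ : Finset (LTL AP)) (α : LTL AP)
      (h1 : α ∈ Γ) (h2 : LTL.neg α ∈ Γ) : Valid anc (Tab.cross Γ)
  | unfin (anc) (Γ : Finset (LTL AP)) : Valid anc (Tab.unfin Γ)
  | static1 (anc) (Γ : Finset (LTL AP)) (t : Tab AP)
      (h : Static1 Γ t.label) (hv : Valid (anc ++ [Γ]) t) :
      Valid anc (Tab.node1 Γ t)
  | static2 (anc) (Γ : Finset (LTL AP)) (t₁ t₂ : Tab AP)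
      (h : Static2 Γ t₁.label t₂.label)
      (hv₁ : Valid (anc ++ [Γ]) t₁) (hv₂ : Valid (anc ++ [Γ]) t₂) :
      Valid anc (Tab.node2 Γ t₁ t₂)
  | loop (anc) (Γ : Finset (LTL AP)) (hp : Poised Γ) (h : LoopCond anc Γ) :
      Valid anc (Tab.tick Γ)
  | prune (anc) (Γ : Finset (LTL AP)) (hp : Poised Γ) (h : PruneCond anc Γ) :
      Valid anc (Tab.cross Γ)
  | prune0 (anc) (Γ : Finset (LTL AP)) (hp : Poised Γ) (h : Prune0Cond anc Γ) :
      Valid anc (Tab.cross Γ)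
  | transition (anc) (Γ : Finset (LTL AP)) (t : Tab AP) (hp : Poised Γ)
      (hl : ¬ LoopCond anc Γ) (hpr : ¬ PruneCond anc Γ)
      (hp0 : ¬ Prune0Cond anc Γ)
      (h : t.label = nextLabel Γ) (hv : Valid (anc ++ [Γ]) t) :
      Valid anc (Tab.node1 Γ t)

/-- `T` is a tableau for `φ`: root labelled `{φ}` and built by the rules. -/
def IsTableauFor {AP : Type} [DecidableEq AP] (φ : LTL AP) (T : Tab AP) : Prop :=
  T.label = {φ} ∧ Valid [] T

open LTL in
/-- A node must be made a leaf whenever EMPTY, CONTRADICTION, LOOP, PRUNE or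
PRUNE₀ applies to it. -/
def ForcedLeaf {AP : Type} [DecidableEq AP]
    (anc : List (Finset (LTL AP))) (Γ : Finset (LTL AP)) : Prop :=
  Γ = ∅ ∨ (∃ α : LTL AP, α ∈ Γ ∧ LTL.neg α ∈ Γ) ∨
    (Poised Γ ∧ (LoopCond anc Γ ∨ PruneCond anc Γ ∨ Prune0Cond anc Γ))

open LTL in
/-- One step of branch construction: from a node labelled `Γ` with proper
ancestor labels `anc` (root first), which is not forced to be a leaf, to a
child labelled `Δ` obtained by a static rule or by TRANSITION. -/
def BranchStep {AP : Type} [DecidableEq AP]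
    (anc : List (Finset (LTL AP))) (Γ Δ : Finset (LTL AP)) : Prop :=
  ¬ ForcedLeaf anc Γ ∧
    (Static1 Γ Δ ∨ (∃ Δ', Static2 Γ Δ Δ') ∨ (∃ Δ', Static2 Γ Δ' Δ) ∨
      (Poised Γ ∧ Δ = nextLabel Γ))

namespace LTL

/-- `seg Γ a b = ⋃ { Γ s : a ≤ s ≤ b }`. -/
def seg {AP : Type} (Γ : ℕ → Finset (LTL AP)) (a b : ℕ) : Set (LTL AP) :=
  {ψ | ∃ s, a ≤ s ∧ s ≤ b ∧ ψ ∈ Γ s}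

end LTL

open LTL in
/-- A branch `x_0, …, x_n` of a tableau for `φ` ending in a tick via EMPTY or
LOOP, described by its sequence of labels `Γ`, with `j 0 < … < j (k-1)` the
indices at which the TRANSITION rule is applied, and, in the LOOP case, `l`
the index such that `x_{j l}` is the matching poised ancestor. -/
structure TickedBranch (AP : Type) [DecidableEq AP] (φ : LTL AP) where
  n : ℕ
  Γ : ℕ → Finset (LTL AP)
  k : ℕ
  j : ℕ → ℕ
  viaEmpty : Bool
  l : ℕ
  root : Γ 0 = {φ}
  jmono : ∀ ⦃a b : ℕ⦄, a < b → b < k → j a < j b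
  jlt : ∀ i < k, j i < n
  trans_step : ∀ i < k, Poised (Γ (j i)) ∧ Γ (j i + 1) = nextLabel (Γ (j i))
  static_step : ∀ s < n, (¬ ∃ i < k, j i = s) →
    Static1 (Γ s) (Γ (s + 1)) ∨ (∃ Δ', Static2 (Γ s) (Γ (s + 1)) Δ') ∨
      (∃ Δ', Static2 (Γ s) Δ' (Γ (s + 1)))
  /-- in the EMPTY case we set `j k = n` -/
  jk : viaEmpty = true → j k = n
  empty_end : viaEmpty = true → Γ n = ∅
  loop_end : viaEmpty = false → l < k ∧ Poised (Γ n) ∧ Γ n ⊆ Γ (j l) ∧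
    ∀ α β : LTL AP, LTL.next (α.until_ β) ∈ Γ (j l) →
      ∃ w, j l < w ∧ w ≤ n ∧ β ∈ Γ w

namespace TickedBranch

open LTL

variable {AP : Type} [DecidableEq AP] {φ : LTL AP}

/-- `N = k - 1` in the EMPTY case, `N = l` in the LOOP case. -/
def N (b : TickedBranch AP φ) : ℕ := if b.viaEmpty then b.k - 1 else b.l

/-- `M = 1` in the EMPTY case, `M = k - l` in the LOOP case. -/
def M (b : TickedBranch AP φ) : ℕ := if b.viaEmpty then 1 else b.k - b.l

/-- `Δ_i` for `0 ≤ i ≤ N + M - 1` : the union of the labels strictly after the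
`(i-1)`-th TRANSITION up to the `i`-th one (reading `j_{-1} = -1`), where
`Δ_N` additionally collects the labels strictly after the `(k-1)`-th
TRANSITION up to the end `n` of the branch. -/
def deltaBase (b : TickedBranch AP φ) (i : ℕ) : Set (LTL AP) :=
  if i = b.N then
    seg b.Γ (if b.N = 0 then 0 else b.j (b.N - 1) + 1) (b.j b.N) ∪
      seg b.Γ (b.j (b.k - 1) + 1) b.n
  else if i = 0 then seg b.Γ 0 (b.j 0)
  else seg b.Γ (b.j (i - 1) + 1) (b.j i)

/-- The state-label sequence `(Δ_i)_{i ≥ 0}` extracted from the branch: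
for `i ≥ N + M`, `Δ_i = Δ_{(i-N) mod M + N}`. -/
def delta (b : TickedBranch AP φ) (i : ℕ) : Set (LTL AP) :=
  if i < b.N + b.M then b.deltaBase i else b.deltaBase ((i - b.N) % b.M + b.N)

end TickedBranch

namespace LTL

/-- Length of a formula: number of nodes of its syntax tree. -/
def length {AP : Type} : LTL AP → ℕ
  | atom _ => 1
  | neg α => α.length + 1
  | and α β => α.length + β.length + 1
  | next α => α.length + 1
  | until_ α β => α.length + β.length + 1

/-- The set of subformulas of a formula. -/
def subf {AP : Type} [DecidableEq AP] : LTL AP → Finset (LTL AP)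
  | atom p => {atom p}
  | neg α => insert (neg α) α.subf
  | and α β => insert (α.and β) (α.subf ∪ β.subf)
  | next α => insert (next α) α.subf
  | until_ α β => insert (α.until_ β) (α.subf ∪ β.subf)

/-- The closure set of `φ` :
`{ψ, ¬ψ : ψ ≤ φ} ∪ {X(αUβ), ¬X(αUβ) : αUβ ≤ φ}`. -/
def closure {AP : Type} [DecidableEq AP] (φ : LTL AP) : Finset (LTL AP) :=
  φ.subf ∪ φ.subf.image neg ∪
    φ.subf.biUnion fun ψ =>
      match ψ with
      | until_ α β => {next (α.until_ β), neg (next (α.until_ β))}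
      | _ => (∅ : Finset (LTL AP))

/-- Right-nested conjunction of a nonempty list of conjuncts. -/
def conjAll {AP : Type} : LTL AP → List (LTL AP) → LTL AP
  | γ, [] => γ
  | γ, c :: t => γ.and (conjAll c t)

end LTL

section Hl2Helpers

open LTL

variable {AP : Type} [DecidableEq AP] {φ : LTL AP}

/-- Formulas of shape `Xγ` or `¬Xγ`. -/
def IsNexty (ψ : LTL AP) : Prop :=
  (∃ γ : LTL AP, ψ = LTL.next γ) ∨ (∃ γ : LTL AP, ψ = LTL.neg (LTL.next γ))

lemma static1_persist {Γ Γ' : Finset (LTL AP)} {ψ : LTL AP}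
    (hψ : IsNexty ψ) (h : Static1 Γ Γ') (hm : ψ ∈ Γ) : ψ ∈ Γ' := by
  cases h with
  | conj α β Δ h =>
      rcases Finset.mem_insert.1 hm with h1 | h1
      · rcases hψ with ⟨γ, rfl⟩ | ⟨γ, rfl⟩ <;> cases h1
      · exact Finset.mem_insert_of_mem (Finset.mem_insert_of_mem h1)
  | negneg α Δ h =>
      rcases Finset.mem_insert.1 hm with h1 | h1
      · rcases hψ with ⟨γ, rfl⟩ | ⟨γ, rfl⟩ <;> cases h1
      · exact Finset.mem_insert_of_mem h1

lemma static2_persist {Γ Γ₁ Γ₂ : Finset (LTL AP)} {ψ : LTL AP}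
    (hψ : IsNexty ψ) (h : Static2 Γ Γ₁ Γ₂) (hm : ψ ∈ Γ) : ψ ∈ Γ₁ ∧ ψ ∈ Γ₂ := by
  cases h with
  | negconj α β Δ h =>
      rcases Finset.mem_insert.1 hm with h1 | h1
      · rcases hψ with ⟨γ, rfl⟩ | ⟨γ, rfl⟩ <;> cases h1
      · exact ⟨Finset.mem_insert_of_mem h1, Finset.mem_insert_of_mem h1⟩
  | untl α β Δ h =>
      rcases Finset.mem_insert.1 hm with h1 | h1
      · rcases hψ with ⟨γ, rfl⟩ | ⟨γ, rfl⟩ <;> cases h1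
      · exact ⟨Finset.mem_insert_of_mem h1,
          Finset.mem_insert_of_mem (Finset.mem_insert_of_mem h1)⟩
  | neguntl α β Δ h =>
      rcases Finset.mem_insert.1 hm with h1 | h1
      · rcases hψ with ⟨γ, rfl⟩ | ⟨γ, rfl⟩ <;> cases h1
      · exact ⟨Finset.mem_insert_of_mem (Finset.mem_insert_of_mem h1),
          Finset.mem_insert_of_mem (Finset.mem_insert_of_mem h1)⟩

lemma mem_nextLabel_next {Γ : Finset (LTL AP)} {α : LTL AP}
    (h : LTL.next α ∈ Γ) : α ∈ nextLabel Γ := by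
  apply Finset.mem_biUnion.2
  exact ⟨LTL.next α, h, by simp⟩

lemma mem_nextLabel_neg {Γ : Finset (LTL AP)} {α : LTL AP}
    (h : LTL.neg (LTL.next α) ∈ Γ) : LTL.neg α ∈ nextLabel Γ := by
  apply Finset.mem_biUnion.2
  exact ⟨LTL.neg (LTL.next α), h, by simp⟩

namespace TickedBranch

lemma persist (b : TickedBranch AP φ) {ψ : LTL AP} (hψ : IsNexty ψ)
    {s t : ℕ} (hst : s ≤ t) (ht : t ≤ b.n)
    (hstat : ∀ r, s ≤ r → r < t → ¬ ∃ i < b.k, b.j i = r)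
    (hm : ψ ∈ b.Γ s) : ψ ∈ b.Γ t := by
  revert ht hstat
  induction t, hst using Nat.le_induction with
  | base => intro _ _; exact hm
  | succ t hst ih =>
      intro ht hstat
      have h1 : ψ ∈ b.Γ t :=
        ih (by omega) (fun r h1 h2 => hstat r h1 (by omega))
      have hs := b.static_step t (by omega) (hstat t hst (by omega))
      rcases hs with h | ⟨Δ', h⟩ | ⟨Δ', h⟩
      · exact static1_persist hψ h h1
      · exact (static2_persist hψ h h1).1
      · exact (static2_persist hψ h h1).2

lemma jmono' (b : TickedBranch AP φ) {a c : ℕ} (h : a ≤ c) (hc : c < b.k) :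
    b.j a ≤ b.j c := by
  rcases eq_or_lt_of_le h with rfl | h
  · exact le_rfl
  · exact (b.jmono h hc).le

lemma seg_to_trans (b : TickedBranch AP φ) {ψ : LTL AP} (hψ : IsNexty ψ)
    {m : ℕ} (hm : m < b.k)
    (h : ψ ∈ seg b.Γ (if m = 0 then 0 else b.j (m - 1) + 1) (b.j m)) :
    ψ ∈ b.Γ (b.j m) := by
  obtain ⟨s, hs1, hs2, hs3⟩ := h
  refine b.persist hψ hs2 (b.jlt m hm).le ?_ hs3
  rintro r hr1 hr2 ⟨m', hm', rfl⟩
  have hmm : m' < m := by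
    by_contra hc
    push_neg at hc
    have := b.jmono' hc hm'
    omega
  have hm1 : m ≠ 0 := by omega
  rw [if_neg hm1] at hs1
  have : b.j m' ≤ b.j (m - 1) := b.jmono' (by omega) (by omega)
  omega

lemma seg_to_end (b : TickedBranch AP φ) {ψ : LTL AP} (hψ : IsNexty ψ)
    (h : ψ ∈ seg b.Γ (b.j (b.k - 1) + 1) b.n) : ψ ∈ b.Γ b.n := by
  obtain ⟨s, hs1, hs2, hs3⟩ := h
  refine b.persist hψ hs2 le_rfl ?_ hs3
  rintro r hr1 hr2 ⟨m', hm', rfl⟩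
  have : b.j m' ≤ b.j (b.k - 1) := b.jmono' (by omega) (by omega)
  omega

lemma seg_subset_deltaBase (b : TickedBranch AP φ) (t : ℕ) :
    seg b.Γ (if t = 0 then 0 else b.j (t - 1) + 1) (b.j t) ⊆ b.deltaBase t := by
  intro ψ h
  unfold deltaBase
  by_cases h1 : t = b.N
  · rw [if_pos h1]
    refine Set.mem_union_left _ ?_
    rw [← h1]
    exact h
  · rw [if_neg h1]
    by_cases h2 : t = 0
    · rw [if_pos h2]
      subst h2
      simpa using h
    · rw [if_neg h2]
      rwa [if_neg h2] at h

lemma key (b : TickedBranch AP φ) {ψ ψ' : LTL AP} (hψ : IsNexty ψ)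
    (hnl : ∀ Γ : Finset (LTL AP), ψ ∈ Γ → ψ' ∈ nextLabel Γ) (i : ℕ)
    (h : ψ ∈ b.delta i) : ψ' ∈ b.delta (i + 1) := by
  -- core: from membership in ∆-base to membership at the transition node
  have core : ∀ m, m < b.k → ψ ∈ b.deltaBase m → ψ ∈ b.Γ (b.j m) := by
    intro m hm hmem
    unfold deltaBase at hmem
    by_cases h1 : m = b.N
    · rw [if_pos h1] at hmem
      rcases hmem with hmem | hmem
      · rw [h1]
        exact b.seg_to_trans hψ (h1 ▸ hm) hmem
      · have hend := b.seg_to_end hψ hmem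
        cases hv : b.viaEmpty with
        | true =>
            rw [b.empty_end hv] at hend
            exact absurd hend (Finset.notMem_empty ψ)
        | false =>
            obtain ⟨hlk, hp, hsub, _⟩ := b.loop_end hv
            have hNl : b.N = b.l := by simp [TickedBranch.N, hv]
            rw [h1, hNl]
            exact hsub hend
    · rw [if_neg h1] at hmem
      by_cases h2 : m = 0
      · subst h2
        rw [if_pos rfl] at hmem
        exact b.seg_to_trans hψ hm (by simpa using hmem)
      · rw [if_neg h2] at hmem
        exact b.seg_to_trans hψ hm (by rw [if_neg h2]; exact hmem)
  -- landing: from the node after a transition into the next ∆-base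
  have land : ∀ m, m < b.k → ψ' ∈ b.Γ (b.j m + 1) →
      ψ' ∈ b.deltaBase (if m = b.k - 1 then b.N else m + 1) := by
    intro m hm hmem
    by_cases hmk : m = b.k - 1
    · rw [if_pos hmk]
      unfold deltaBase
      rw [if_pos rfl]
      refine Set.mem_union_right _ ⟨b.j m + 1, ?_, ?_, hmem⟩
      · simp [hmk]
      · have := b.jlt m hm; omega
    · rw [if_neg hmk]
      have hmk1 : m + 1 < b.k := by omega
      apply b.seg_subset_deltaBase (m + 1)
      refine ⟨b.j m + 1, ?_, ?_, hmem⟩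
      · simp
      · have := b.jmono (show m < m + 1 by omega) hmk1; omega
  -- step: combine core, the transition rule, and land
  have step : ∀ m, m < b.k → ψ ∈ b.deltaBase m →
      ψ' ∈ b.deltaBase (if m = b.k - 1 then b.N else m + 1) := by
    intro m hm hmem
    refine land m hm ?_
    rw [(b.trans_step m hm).2]
    exact hnl _ (core m hm hmem)
  cases hv : b.viaEmpty with
  | true =>
      have hN : b.N = b.k - 1 := by simp [TickedBranch.N, hv]
      have hM : b.M = 1 := by simp [TickedBranch.M, hv]
      by_cases hk0 : b.k = 0
      · exfalso
        have hj0 : b.j 0 = b.n := by rw [← hk0]; exact b.jk hv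
        have hN0 : b.N = 0 := by rw [hN, hk0]
        have h0 : ψ ∈ b.deltaBase 0 := by
          unfold delta at h
          split_ifs at h with h'
          · have hi0 : i = 0 := by omega
            rwa [hi0] at h
          · have : (i - b.N) % b.M + b.N = 0 := by
              rw [hN0, hM]; simp [Nat.mod_one]
            rwa [this] at h
        unfold deltaBase at h0
        rw [if_pos hN0.symm] at h0
        rcases h0 with h0 | h0
        · obtain ⟨s, _, hs2, hs3⟩ := h0
          rw [hN0, hj0] at hs2
          have : ψ ∈ b.Γ b.n := by
            refine b.persist hψ hs2 le_rfl ?_ hs3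
            rintro r _ _ ⟨m', hm', _⟩
            omega
          rw [b.empty_end hv] at this
          exact Finset.notMem_empty ψ this
        · obtain ⟨s, hs1, hs2, hs3⟩ := h0
          rw [hk0] at hs1
          norm_num at hs1
          rw [hj0] at hs1
          omega
      · have hred : ∀ i' : ℕ, b.delta i' =
            b.deltaBase (if i' ≤ b.N then i' else b.N) := by
          intro i'
          unfold delta
          rw [hM]
          by_cases h' : i' < b.N + 1
          · rw [if_pos h', if_pos (show i' ≤ b.N by omega)]
          · rw [if_neg h', if_neg (show ¬ i' ≤ b.N by omega), Nat.mod_one, Nat.zero_add]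
        by_cases hi : i ≤ b.N
        · rw [hred i, if_pos hi] at h
          rw [hred (i + 1)]
          have hik : i < b.k := by omega
          have h3 := step i hik h
          by_cases hc : i = b.k - 1
          · rw [if_pos hc] at h3
            rw [if_neg (show ¬ i + 1 ≤ b.N by omega)]
            exact h3
          · rw [if_neg hc] at h3
            rw [if_pos (show i + 1 ≤ b.N by omega)]
            exact h3
        · rw [hred i, if_neg hi] at h
          rw [hred (i + 1), if_neg (show ¬ i + 1 ≤ b.N by omega)]
          have hNk : b.N < b.k := by omega
          have h3 := step b.N hNk h
          rwa [if_pos (show b.N = b.k - 1 by omega)] at h3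
  | false =>
      obtain ⟨hlk, hpn, hsub, hfill⟩ := b.loop_end hv
      have hN : b.N = b.l := by simp [TickedBranch.N, hv]
      have hM : b.M = b.k - b.l := by simp [TickedBranch.M, hv]
      have hNM : b.N + b.M = b.k := by omega
      have hMpos : 0 < b.M := by omega
      have hdelta : ∀ i' : ℕ, b.delta i' =
          b.deltaBase (if i' < b.k then i' else (i' - b.N) % b.M + b.N) := by
        intro i'
        unfold delta
        rw [hNM]
        split_ifs <;> rfl
      have key1 : ∀ a : ℕ,
          (a + 1) % b.M = if a % b.M = b.M - 1 then 0 else a % b.M + 1 := by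
        intro a
        rcases Nat.lt_or_ge (a % b.M + 1) b.M with hc | hc
        · rw [if_neg (by omega)]
          conv_lhs => rw [← Nat.mod_add_div a b.M]
          rw [add_right_comm, Nat.add_mul_mod_self_left]
          exact Nat.mod_eq_of_lt hc
        · have hlt := Nat.mod_lt a hMpos
          have hE : a % b.M = b.M - 1 := by omega
          rw [if_pos hE]
          conv_lhs => rw [← Nat.mod_add_div a b.M]
          rw [add_right_comm, Nat.add_mul_mod_self_left, hE]
          have hh : b.M - 1 + 1 = b.M := by omega
          rw [hh, Nat.mod_self]
      by_cases h2 : i < b.k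
      · have hdi : b.delta i = b.deltaBase i := by rw [hdelta i, if_pos h2]
        rw [hdi] at h
        have h3 := step i h2 h
        by_cases h1 : i + 1 < b.k
        · have hdi1 : b.delta (i + 1) = b.deltaBase (i + 1) := by
            rw [hdelta (i + 1), if_pos h1]
          rw [hdi1]
          rwa [if_neg (show ¬ i = b.k - 1 by omega)] at h3
        · have hik : i = b.k - 1 := by omega
          have hdi1 : b.delta (i + 1) = b.deltaBase b.N := by
            rw [hdelta (i + 1), if_neg h1]
            have hh : i + 1 - b.N = b.M := by omega
            rw [hh, Nat.mod_self, Nat.zero_add]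
          rw [hdi1]
          rwa [if_pos hik] at h3
      · obtain ⟨r, hr⟩ : ∃ r, r = (i - b.N) % b.M := ⟨_, rfl⟩
        have hrlt : r < b.M := hr ▸ Nat.mod_lt _ hMpos
        have hdi : b.delta i = b.deltaBase (r + b.N) := by
          rw [hdelta i, if_neg h2, ← hr]
        have hmk : r + b.N < b.k := by omega
        rw [hdi] at h
        have h3 := step (r + b.N) hmk h
        have hdi1 : b.delta (i + 1) =
            b.deltaBase ((if r = b.M - 1 then 0 else r + 1) + b.N) := by
          rw [hdelta (i + 1), if_neg (show ¬ i + 1 < b.k by omega)]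
          have h4 : i + 1 - b.N = (i - b.N) + 1 := by omega
          rw [h4, key1 (i - b.N), ← hr]
        rw [hdi1]
        by_cases h5 : r = b.M - 1
        · rw [if_pos h5]
          rw [if_pos (show r + b.N = b.k - 1 by omega)] at h3
          simpa using h3
        · rw [if_neg h5]
          rw [if_neg (show ¬ r + b.N = b.k - 1 by omega)] at h3
          have hh : (r + 1) + b.N = r + b.N + 1 := by omega
          rw [hh]
          exact h3

end TickedBranch

end Hl2Helpers

open LTL in
/-- Lemma hl2: in the state-label sequence `(Δ_i)` extracted
from a ticked branch of a tableau for `φ`: if `Xα ∈ Δ_i` then `α ∈ Δ_{i+1}`,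
and if `¬Xα ∈ Δ_i` then `¬α ∈ Δ_{i+1}`. -/
theorem hl2 {AP : Type} [DecidableEq AP] [Countable AP] {φ : LTL AP}
    (b : TickedBranch AP φ) (α : LTL AP) (i : ℕ) :
    (LTL.next α ∈ b.delta i → α ∈ b.delta (i + 1)) ∧
    (LTL.neg (LTL.next α) ∈ b.delta i → LTL.neg α ∈ b.delta (i + 1)) := by
  constructor
  · exact b.key (Or.inl ⟨α, rfl⟩) (fun Γ h => mem_nextLabel_next h) i
  · exact b.key (Or.inr ⟨α, rfl⟩) (fun Γ h => mem_nextLabel_neg h) i
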